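/- Let α, β be real numbers with α > -1 and β > -1, let m ≥ 2 be an integer and n a natural number with n ≤ m - 2. Define f(t) = (Γ(t + α)/Γ(t)) · (t - n)_n · (Γ(m - t + β + n)/Γ(m - t)) for real t with 0 < t < m, and let Δⁿf(x) = ∑_{j=0}^{n} (-1)^{n-j} C(n, j) f(x + j) denote the n-th iterated forward difference. Then for every integer x with 1 ≤ x ≤ m - 1 - n, Δⁿf(x) = (Γ(x + α)/Γ(x)) · (Γ(m - x + β)/Γ(m - x)) · (α + 1)_n · (m - n - x)_n · ∑_{k=0}^{n} ((-n)_k (-n - β)_k (1 - x)_k) / ((α + 1)_k (m - n - x)_k k!). -/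

import Mathlib

/-- Pochhammer symbol (rising factorial) for a real number. -/
noncomputable def poch (a : ℝ) (k : ℕ) : ℝ := (ascPochhammer ℝ k).eval a



lemma poch_zero (a : ℝ) : poch a 0 = 1 := by simp [poch]

lemma poch_succ_right (a : ℝ) (k : ℕ) : poch a (k+1) = poch a k * (a + k) := by
  simp [poch, ascPochhammer_succ_eval]

lemma poch_succ_left (a : ℝ) (k : ℕ) : poch a (k+1) = a * poch (a+1) k := by
  simp [poch, ascPochhammer_succ_left, Polynomial.eval_comp]

lemma poch_add (a : ℝ) (j k : ℕ) : poch a (j + k) = poch a j * poch (a + j) k := by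
  have := ascPochhammer_mul ℝ j k
  have h := congrArg (Polynomial.eval a) this
  simpa [poch, Polynomial.eval_comp] using h.symm

lemma poch_pos {a : ℝ} (ha : 0 < a) (k : ℕ) : 0 < poch a k := by
  induction k with
  | zero => simp [poch_zero]
  | succ k ih => rw [poch_succ_right]; positivity

lemma Gamma_add_nat {a : ℝ} (ha : 0 < a) (k : ℕ) :
    Real.Gamma (a + k) = poch a k * Real.Gamma a := by
  induction k with
  | zero => simp [poch_zero]
  | succ k ih =>
    have h1 : a + (k+1:ℕ) = (a + k) + 1 := by push_cast; ring
    have h2 : a + (k:ℝ) ≠ 0 := by positivity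
    rw [h1, Real.Gamma_add_one h2, ih, poch_succ_right]; ring

lemma poch_neg (a : ℝ) (k : ℕ) : poch (-a) k = (-1)^k * poch (a - k + 1) k := by
  induction k generalizing a with
  | zero => simp [poch_zero]
  | succ k ih =>
    have hc : a - ((k+1 : ℕ):ℝ) + 1 = a - k := by push_cast; ring
    rw [poch_succ_right, ih, hc, poch_succ_left]
    push_cast
    ring

lemma poch_neg_nat (n k : ℕ) (h : k ≤ n) :
    poch (-(n:ℝ)) k = (-1)^k * (Nat.factorial k) * (Nat.choose n k) := by
  induction k with
  | zero => simp [poch_zero]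
  | succ k ih =>
    have hk : k ≤ n := Nat.le_of_succ_le h
    have hrec : (n.choose (k+1) : ℝ) * (k+1) = n.choose k * (n - k) := by
      have := Nat.add_one_mul_choose_eq n k
      have h2 : (n.choose (k+1)) * (k+1) = n.choose k * (n - k) := by
        rw [Nat.choose_succ_right_eq]
      calc (n.choose (k+1) : ℝ) * (k+1) = ((n.choose (k+1)) * (k+1) : ℕ) := by push_cast; ring
        _ = ((n.choose k * (n - k) : ℕ) : ℝ) := by rw [h2]
        _ = n.choose k * ((n:ℝ) - k) := by
            push_cast [Nat.cast_sub hk]; ring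
    have hfac : ((k+1).factorial : ℝ) = (k.factorial) * (k+1) := by
      rw [Nat.factorial_succ]; push_cast; ring
    rw [poch_succ_right, ih hk, hfac]
    push_cast
    linear_combination ((-1:ℝ))^k * (k.factorial : ℝ) * hrec

noncomputable def Dop : ℕ → (ℤ → ℝ) → ℤ → ℝ
  | 0, w, y => w y
  | (k+1), w, y => Dop k w (y+1) - Dop k w y



lemma neg_one_pow_sub {k j : ℕ} (h : j ≤ k) : ((-1:ℝ))^(k-j) = (-1)^k * (-1)^j := by
  have : ((-1:ℝ))^(k-j) * (-1)^j = (-1)^k := by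
    rw [← pow_add, Nat.sub_add_cancel h]
  have hj : ((-1:ℝ))^j * (-1)^j = 1 := by
    rw [← pow_add]; simp [pow_add, ← two_mul, pow_mul]
  calc ((-1:ℝ))^(k-j) = ((-1:ℝ))^(k-j) * ((-1)^j * (-1)^j) := by rw [hj]; ring
    _ = (-1)^k * (-1)^j := by rw [← mul_assoc, this]

lemma sum_eq_Dop (k : ℕ) (w : ℤ → ℝ) (y : ℤ) :
    ∑ j ∈ Finset.range (k+1), (-1:ℝ)^(k-j) * (Nat.choose k j : ℝ) * w (y + j)
      = Dop k w y := by
  induction k generalizing y with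
  | zero => simp [Dop]
  | succ k ih =>
    rw [show Dop (k+1) w y = Dop k w (y+1) - Dop k w y from rfl, ← ih, ← ih]
    rw [Finset.sum_range_succ' (fun j => (-1:ℝ)^(k+1-j) * (Nat.choose (k+1) j : ℝ) * w (y + j))]
    push_cast
    have e1 : ∀ j ∈ Finset.range (k+1),
        (-1:ℝ)^(k-j) * (Nat.choose (k+1) (j+1) : ℝ) * w (y + ((j:ℤ)+1))
        = (-1:ℝ)^(k-j) * (Nat.choose k j : ℝ) * w ((y+1) + j)
          + (-1:ℝ)^(k-j) * (Nat.choose k (j+1) : ℝ) * w (y + ((j:ℤ)+1)) := by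
      intro j hj
      rw [Nat.choose_succ_succ]
      push_cast
      have : (y:ℤ) + 1 + j = y + ((j:ℤ)+1) := by ring
      rw [this]; ring
    rw [Finset.sum_congr rfl e1, Finset.sum_add_distrib]
    have e2 : ∑ j ∈ Finset.range (k+1), (-1:ℝ)^(k-j) * (Nat.choose k (j+1) : ℝ) * w (y + ((j:ℤ)+1))
        = ∑ j ∈ Finset.range k, (-1:ℝ)^(k-j) * (Nat.choose k (j+1) : ℝ) * w (y + ((j:ℤ)+1)) := by
      rw [Finset.sum_range_succ]; simp
    have e3 : ∑ j ∈ Finset.range (k+1), (-1:ℝ)^(k-j) * (Nat.choose k j : ℝ) * w (y + j)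
        = ∑ j ∈ Finset.range k, (-1:ℝ)^(k-(j+1)) * (Nat.choose k (j+1) : ℝ) * w (y + ((j:ℤ)+1))
          + (-1:ℝ)^k * w y := by
      rw [Finset.sum_range_succ' (fun j => (-1:ℝ)^(k-j) * (Nat.choose k j : ℝ) * w (y + j))]
      push_cast
      simp
    rw [e2, e3]
    have e4 : ∀ j ∈ Finset.range k, (-1:ℝ)^(k-j) * (Nat.choose k (j+1) : ℝ) * w (y + (j+1))
        = -((-1:ℝ)^(k-(j+1)) * (Nat.choose k (j+1) : ℝ) * w (y + ((j:ℤ)+1))) := by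
      intro j hj
      simp only [Finset.mem_range] at hj
      rw [neg_one_pow_sub (by omega : j ≤ k), neg_one_pow_sub (by omega : j+1 ≤ k)]
      ring
    rw [Finset.sum_congr rfl e4]
    rw [Finset.sum_neg_distrib]
    simp only [Nat.choose_zero_right, Nat.cast_one, Nat.cast_zero, add_zero, Nat.sub_zero]
    ring


lemma Dop_leibniz (u v : ℤ → ℝ) (n : ℕ) (x : ℤ) :
    Dop n (fun t => u t * v t) x
      = ∑ k ∈ Finset.range (n+1),
          (Nat.choose n k : ℝ) * Dop k u x * Dop (n-k) v (x + k) := by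
  induction n generalizing x with
  | zero => simp [Dop]
  | succ n ih =>
    have step : Dop (n+1) (fun t => u t * v t) x
        = Dop n (fun t => u t * v t) (x+1) - Dop n (fun t => u t * v t) x := rfl
    rw [step, ih, ih, ← Finset.sum_sub_distrib]
    have e1 : ∀ k ∈ Finset.range (n+1),
        (Nat.choose n k : ℝ) * Dop k u (x+1) * Dop (n-k) v ((x+1) + k)
          - (Nat.choose n k : ℝ) * Dop k u x * Dop (n-k) v (x + k)
        = (Nat.choose n k : ℝ) * Dop k u x * Dop (n+1-k) v (x + k)
          + (Nat.choose n k : ℝ) * Dop (k+1) u x * Dop (n-k) v (x + (k+1)) := by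
      intro k hk
      simp only [Finset.mem_range] at hk
      have hk' : k ≤ n := by omega
      have h1 : n + 1 - k = (n - k) + 1 := by omega
      have h2 : Dop ((n-k)+1) v (x+k) = Dop (n-k) v (x+k+1) - Dop (n-k) v (x+k) := rfl
      have h3 : Dop (k+1) u x = Dop k u (x+1) - Dop k u x := rfl
      have h4 : (x+1) + (k:ℤ) = x + k + 1 := by ring
      have h5 : x + ((k:ℤ)+1) = x + k + 1 := by ring
      rw [h1, h2, h3, h4, h5]
      ring
    rw [Finset.sum_congr rfl e1, Finset.sum_add_distrib]
    -- target : ∑ k ∈ range (n+2), C(n+1,k) * Dop k u x * Dop (n+1-k) v (x+k)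
    rw [Finset.sum_range_succ' (fun k => (Nat.choose (n+1) k : ℝ) * Dop k u x * Dop (n+1-k) v (x + k))]
    push_cast
    have e2 : ∀ k ∈ Finset.range (n+1),
        (Nat.choose (n+1) (k+1) : ℝ) * Dop (k+1) u x * Dop (n-k) v (x + ((k:ℤ)+1))
        = (Nat.choose n k : ℝ) * Dop (k+1) u x * Dop (n-k) v (x + ((k:ℤ)+1))
          + (Nat.choose n (k+1) : ℝ) * Dop (k+1) u x * Dop (n-k) v (x + ((k:ℤ)+1)) := by
      intro k hk
      rw [Nat.choose_succ_succ]
      push_cast; ring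
    rw [Finset.sum_congr rfl e2, Finset.sum_add_distrib]
    have e3 : ∑ k ∈ Finset.range (n+1),
        (Nat.choose n k : ℝ) * Dop k u x * Dop (n+1-k) v (x + k)
        = ∑ k ∈ Finset.range n,
            (Nat.choose n (k+1) : ℝ) * Dop (k+1) u x * Dop (n-k) v (x + ((k:ℤ)+1))
          + (Nat.choose n 0 : ℝ) * Dop 0 u x * Dop (n+1) v (x + (0:ℕ)) := by
      rw [Finset.sum_range_succ' (fun k => (Nat.choose n k : ℝ) * Dop k u x * Dop (n+1-k) v (x + k))]
      congr 1
      apply Finset.sum_congr rfl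
      intro k hk
      have h6 : n+1-(k+1) = n-k := by omega
      rw [h6]
      push_cast
      ring
    have e4 : ∑ k ∈ Finset.range (n+1),
        (Nat.choose n (k+1) : ℝ) * Dop (k+1) u x * Dop (n-k) v (x + ((k:ℤ)+1))
        = ∑ k ∈ Finset.range n,
            (Nat.choose n (k+1) : ℝ) * Dop (k+1) u x * Dop (n-k) v (x + ((k:ℤ)+1)) := by
      rw [Finset.sum_range_succ]
      simp
    rw [e3, e4]
    simp only [Nat.choose_zero_right, Nat.cast_one, Nat.cast_zero, Nat.cast_ofNat,
      Nat.sub_zero, Dop]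
    push_cast
    ring


lemma Dop_A (α : ℝ) (hα : α > -1) (n : ℕ) :
    ∀ k : ℕ, k ≤ n → ∀ y : ℤ, 1 ≤ y →
    Dop k (fun t : ℤ => Real.Gamma ((t:ℝ) + α) / Real.Gamma (t:ℝ) * poch ((t:ℝ) - n) n) y
    = poch (α + n - k + 1) k * (Real.Gamma ((y:ℝ) + α) / Real.Gamma (y:ℝ))
        * poch ((y:ℝ) + k - n) (n - k) := by
  intro k
  induction k with
  | zero =>
    intro _ y hy
    simp [Dop, poch_zero]
  | succ k ih =>
    intro hk y hy
    have hk' : k ≤ n := by omega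
    have step : Dop (k+1) (fun t : ℤ => Real.Gamma ((t:ℝ) + α) / Real.Gamma (t:ℝ) * poch ((t:ℝ) - n) n) y
        = Dop k (fun t : ℤ => Real.Gamma ((t:ℝ) + α) / Real.Gamma (t:ℝ) * poch ((t:ℝ) - n) n) (y+1)
          - Dop k (fun t : ℤ => Real.Gamma ((t:ℝ) + α) / Real.Gamma (t:ℝ) * poch ((t:ℝ) - n) n) y := rfl
    rw [step, ih hk' (y+1) (by omega), ih hk' y hy]
    push_cast
    have hy0 : (0:ℝ) < (y:ℝ) := by exact_mod_cast hy
    have hΓy : Real.Gamma (y:ℝ) ≠ 0 := (Real.Gamma_pos_of_pos hy0).ne'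
    have hyne : (y:ℝ) ≠ 0 := hy0.ne'
    have hy1 : (1:ℝ) ≤ (y:ℝ) := by exact_mod_cast hy
    have hyα : (y:ℝ) + α ≠ 0 := by
      have : 0 < (y:ℝ) + α := by linarith
      exact this.ne'
    set e := n - (k+1) with hedef
    have hnk : n - k = e + 1 := by omega
    have he : (e:ℝ) = (n:ℝ) - ((k:ℝ) + 1) := by
      rw [hedef]; push_cast [Nat.cast_sub hk]; ring
    rw [hnk]
    rw [show ((y:ℝ) + (k:ℝ) - n) = ((y:ℝ) + k - n) from rfl]
    rw [show Real.Gamma ((y:ℝ) + 1 + α) = Real.Gamma (((y:ℝ) + α) + 1) from by ring_nf,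
        Real.Gamma_add_one hyα, Real.Gamma_add_one hyne]
    rw [poch_succ_left ((y:ℝ) + k - n) e,
        show (y:ℝ) + (k:ℝ) - n + 1 = (y:ℝ) + 1 + k - n from by ring]
    rw [poch_succ_right ((y:ℝ) + 1 + (k:ℝ) - n) e, he]
    rw [show α + (n:ℝ) - ((k:ℝ)+1) + 1 = α + n - k from by ring,
        poch_succ_left (α + (n:ℝ) - k) k,
        show α + (n:ℝ) - (k:ℝ) + 1 = α + n - k + 1 from by ring]
    rw [show (y:ℝ) + ((k:ℝ)+1) - n = (y:ℝ) + 1 + k - n from by ring]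
    field_simp
    ring

lemma Dop_B (β : ℝ) (hβ : β > -1) (m : ℤ) (n : ℕ) :
    ∀ r : ℕ, r ≤ n → ∀ y : ℤ, y + r ≤ m - 1 →
    Dop r (fun t : ℤ => Real.Gamma ((m:ℝ) - t + β + n) / Real.Gamma ((m:ℝ) - t)) y
    = (-1:ℝ)^r * poch (β + n - r + 1) r
        * (Real.Gamma ((m:ℝ) - y + β + n - r) / Real.Gamma ((m:ℝ) - y)) := by
  intro r
  induction r with
  | zero =>
    intro _ y hy
    simp [Dop, poch_zero]
  | succ r ih =>
    intro hr y hy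
    have hr' : r ≤ n := by omega
    have step : Dop (r+1) (fun t : ℤ => Real.Gamma ((m:ℝ) - t + β + n) / Real.Gamma ((m:ℝ) - t)) y
        = Dop r (fun t : ℤ => Real.Gamma ((m:ℝ) - t + β + n) / Real.Gamma ((m:ℝ) - t)) (y+1)
          - Dop r (fun t : ℤ => Real.Gamma ((m:ℝ) - t + β + n) / Real.Gamma ((m:ℝ) - t)) y := rfl
    rw [step, ih hr' (y+1) (by omega), ih hr' y (by omega)]
    push_cast
    have hmy1 : (1:ℝ) ≤ (m:ℝ) - y - 1 := by
      have : y + (r:ℤ) + 2 ≤ m := by omega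
      have h2 : ((y:ℝ) + r + 2) ≤ (m:ℝ) := by exact_mod_cast this
      have hr0 : (0:ℝ) ≤ (r:ℝ) := Nat.cast_nonneg r
      linarith
    have hmy1ne : (m:ℝ) - y - 1 ≠ 0 := by linarith
    have hΓ : Real.Gamma ((m:ℝ) - y - 1) ≠ 0 := (Real.Gamma_pos_of_pos (by linarith)).ne'
    have hnr : (0:ℝ) ≤ (n:ℝ) - r := by
      have : (r:ℝ) ≤ (n:ℝ) := by exact_mod_cast hr'
      linarith
    have hSne : (m:ℝ) - y - 1 + β + n - r ≠ 0 := by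
      have : 0 < (m:ℝ) - y - 1 + β + n - r := by linarith
      exact this.ne'
    have h1 : Real.Gamma ((m:ℝ) - ((y:ℝ)+1) + β + n - r)
        = Real.Gamma ((m:ℝ) - y - 1 + β + n - r) := by
      rw [show (m:ℝ) - ((y:ℝ)+1) + β + n - r = (m:ℝ) - y - 1 + β + n - r from by ring]
    have h2 : Real.Gamma ((m:ℝ) - ((y:ℝ)+1)) = Real.Gamma ((m:ℝ) - y - 1) := by
      rw [show (m:ℝ) - ((y:ℝ)+1) = (m:ℝ) - y - 1 from by ring]
    have h3 : Real.Gamma ((m:ℝ) - y + β + n - r)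
        = ((m:ℝ) - y - 1 + β + n - r) * Real.Gamma ((m:ℝ) - y - 1 + β + n - r) := by
      rw [show (m:ℝ) - y + β + n - r = ((m:ℝ) - y - 1 + β + n - r) + 1 from by ring,
          Real.Gamma_add_one hSne]
    have h5 : Real.Gamma ((m:ℝ) - y + β + n - ((r:ℝ)+1))
        = Real.Gamma ((m:ℝ) - y - 1 + β + n - r) := by
      rw [show (m:ℝ) - y + β + n - ((r:ℝ)+1) = (m:ℝ) - y - 1 + β + n - r from by ring]
    have h4 : Real.Gamma ((m:ℝ) - (y:ℝ)) = ((m:ℝ) - y - 1) * Real.Gamma ((m:ℝ) - y - 1) := by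
      have hg := Real.Gamma_add_one hmy1ne
      rw [show (m:ℝ) - y - 1 + 1 = (m:ℝ) - (y:ℝ) from by ring] at hg
      rw [hg]
    have h6 : poch (β + (n:ℝ) - ((r:ℝ)+1) + 1) (r+1)
        = (β + (n:ℝ) - r) * poch (β + (n:ℝ) - r + 1) r := by
      rw [show β + (n:ℝ) - ((r:ℝ)+1) + 1 = β + (n:ℝ) - r from by ring, poch_succ_left]
    rw [h1, h2, h3, h5, h4, h6]
    field_simp
    ring


/-- Chebyshev's Rodrigues-type formula: with
f(t) = (Γ(t+α)/Γ(t)) (t-n)_n (Γ(m-t+β+n)/Γ(m-t)) for 0 < t < m, the n-th forward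
difference Δⁿf(x) = ∑_{j=0}^{n} (-1)^{n-j} C(n,j) f(x+j) equals
θ²(x) · (α+1)_n (m-n-x)_n ₃F₂(-n, -n-β, 1-x; α+1, m-n-x; 1)
for every integer 1 ≤ x ≤ m-1-n. -/
theorem chebyshev_rodrigues (α β : ℝ) (hα : α > -1) (hβ : β > -1)
    (m : ℤ) (hm : 2 ≤ m) (n : ℕ) (hn : (n : ℤ) ≤ m - 2)
    (f : ℝ → ℝ)
    (hf : ∀ t : ℝ, 0 < t → t < (m : ℝ) →
      f t = (Real.Gamma (t + α) / Real.Gamma t) * poch (t - n) n *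
        (Real.Gamma ((m : ℝ) - t + β + n) / Real.Gamma ((m : ℝ) - t)))
    (x : ℤ) (hx1 : 1 ≤ x) (hx2 : x ≤ m - 1 - n) :
    ∑ j ∈ Finset.range (n + 1),
        (-1 : ℝ) ^ (n - j) * (Nat.choose n j : ℝ) * f ((x : ℝ) + j)
      = (Real.Gamma ((x : ℝ) + α) / Real.Gamma (x : ℝ)) *
        (Real.Gamma ((m : ℝ) - x + β) / Real.Gamma ((m : ℝ) - x)) *
        poch (α + 1) n * poch ((m : ℝ) - n - x) n *
        ∑ k ∈ Finset.range (n + 1),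
          (poch (-(n : ℝ)) k * poch (-(n : ℝ) - β) k * poch (1 - (x : ℝ)) k) /
            (poch (α + 1) k * poch ((m : ℝ) - n - (x : ℝ)) k * (Nat.factorial k : ℝ)) := by
  set A : ℤ → ℝ := fun t => Real.Gamma ((t:ℝ) + α) / Real.Gamma (t:ℝ) * poch ((t:ℝ) - n) n with hA
  set B : ℤ → ℝ := fun t => Real.Gamma ((m:ℝ) - t + β + n) / Real.Gamma ((m:ℝ) - t) with hB
  set T : ℕ → ℝ := fun k => (-1:ℝ)^(n-k) * (Nat.choose n k : ℝ)
      * poch (α + (n:ℝ) - k + 1) k * poch ((x:ℝ) + k - n) (n-k)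
      * poch (β + (k:ℝ) + 1) (n-k) * poch ((m:ℝ) - x - k) k
      * (Real.Gamma ((x:ℝ) + α) / Real.Gamma (x:ℝ))
      * (Real.Gamma ((m:ℝ) - x + β) / Real.Gamma ((m:ℝ) - x)) with hT
  have hx0 : (0:ℝ) < (x:ℝ) := by exact_mod_cast hx1
  have hΓx : Real.Gamma (x:ℝ) ≠ 0 := (Real.Gamma_pos_of_pos hx0).ne'
  have hxm : (x:ℤ) + n ≤ m - 1 := by omega
  -- Step A : LHS sum equals Dop n (A*B) x
  have stepA : ∑ j ∈ Finset.range (n + 1),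
      (-1 : ℝ) ^ (n - j) * (Nat.choose n j : ℝ) * f ((x : ℝ) + j)
      = Dop n (fun t => A t * B t) x := by
    rw [← sum_eq_Dop]
    apply Finset.sum_congr rfl
    intro j hj
    simp only [Finset.mem_range] at hj
    have hj' : (j:ℤ) ≤ n := by exact_mod_cast Nat.lt_succ_iff.1 hj
    have h1 : (0:ℝ) < (x:ℝ) + j := by positivity
    have h2 : (x:ℝ) + j < (m:ℝ) := by
      have : (x:ℤ) + j < m := by omega
      exact_mod_cast this
    rw [hf _ h1 h2]
    simp only [hA, hB]
    push_cast
    ring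
  -- Step B : Leibniz + closed forms
  have stepB : Dop n (fun t => A t * B t) x = ∑ k ∈ Finset.range (n+1), T k := by
    rw [Dop_leibniz]
    apply Finset.sum_congr rfl
    intro k hk
    simp only [Finset.mem_range] at hk
    have hk' : k ≤ n := by omega
    rw [hA, Dop_A α hα n k hk' x hx1]
    have hyB : (x + k) + ((n - k : ℕ) : ℤ) ≤ m - 1 := by
      have : ((n-k:ℕ):ℤ) = (n:ℤ) - k := by push_cast [Nat.cast_sub hk']; ring
      omega
    rw [hB, Dop_B β hβ m n (n-k) (Nat.sub_le n k) (x + k) hyB]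
    have hc1 : ((n-k:ℕ):ℝ) = (n:ℝ) - k := by push_cast [Nat.cast_sub hk']; ring
    have hc2 : ((x + k : ℤ):ℝ) = (x:ℝ) + k := by push_cast; ring
    have hmxk : (0:ℝ) < (m:ℝ) - x - k := by
      have : (x:ℤ) + k + 1 ≤ m := by omega
      have h3 : ((x:ℝ) + k + 1) ≤ (m:ℝ) := by exact_mod_cast this
      linarith
    have hΓmxk : Real.Gamma ((m:ℝ) - x - k) ≠ 0 := (Real.Gamma_pos_of_pos hmxk).ne'
    have hmx0 : (0:ℝ) < (m:ℝ) - x := by linarith [Nat.cast_nonneg (α := ℝ) k]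
    have hΓmx : Real.Gamma ((m:ℝ) - x) ≠ 0 := (Real.Gamma_pos_of_pos hmx0).ne'
    have hG : Real.Gamma ((m:ℝ) - x) = poch ((m:ℝ) - x - k) k * Real.Gamma ((m:ℝ) - x - k) := by
      have := Gamma_add_nat hmxk k
      rw [show (m:ℝ) - x - k + k = (m:ℝ) - x from by ring] at this
      exact this
    rw [hc2]
    rw [show (m:ℝ) - ((x:ℝ) + k) + β + n - ((n-k:ℕ):ℝ) = (m:ℝ) - x + β from by
      rw [hc1]; ring]
    rw [show (m:ℝ) - ((x:ℝ) + k) = (m:ℝ) - x - k from by ring]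
    rw [show β + (n:ℝ) - ((n-k:ℕ):ℝ) + 1 = β + (k:ℝ) + 1 from by rw [hc1]; ring]
    rw [hT]
    have hpoch : poch ((m:ℝ) - x - k) k ≠ 0 := (poch_pos hmxk k).ne'
    rw [hG]
    field_simp [hG]
  -- Step C : RHS equals sum of T (n-k)
  have stepC : (Real.Gamma ((x : ℝ) + α) / Real.Gamma (x : ℝ)) *
        (Real.Gamma ((m : ℝ) - x + β) / Real.Gamma ((m : ℝ) - x)) *
        poch (α + 1) n * poch ((m : ℝ) - n - x) n *
        ∑ k ∈ Finset.range (n + 1),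
          (poch (-(n : ℝ)) k * poch (-(n : ℝ) - β) k * poch (1 - (x : ℝ)) k) /
            (poch (α + 1) k * poch ((m : ℝ) - n - (x : ℝ)) k * (Nat.factorial k : ℝ))
      = ∑ k ∈ Finset.range (n+1), T (n - k) := by
    rw [Finset.mul_sum]
    apply Finset.sum_congr rfl
    intro k hk
    simp only [Finset.mem_range] at hk
    have hk' : k ≤ n := by omega
    have hsub : n - (n - k) = k := by omega
    have hc1 : ((n-k:ℕ):ℝ) = (n:ℝ) - k := by push_cast [Nat.cast_sub hk']; ring
    have haddgen : ∀ a : ℝ, poch a n = poch a k * poch (a + (k:ℝ)) (n-k) := by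
      intro a
      conv_lhs => rw [show n = k + (n-k) from by omega]
      rw [poch_add]
    have hadd1 : poch (α+1) n = poch (α+1) k * poch (α+1+(k:ℝ)) (n-k) := haddgen (α+1)
    have hadd2 : poch ((m:ℝ)-n-x) n
        = poch ((m:ℝ)-n-x) k * poch ((m:ℝ)-n-x+(k:ℝ)) (n-k) := haddgen _
    have hneg1 : poch (-(n:ℝ)) k = (-1:ℝ)^k * (Nat.factorial k) * (Nat.choose n k) :=
      poch_neg_nat n k hk'
    have hneg2 : poch (-(n:ℝ) - β) k = (-1:ℝ)^k * poch ((n:ℝ) + β - k + 1) k := by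
      rw [show -(n:ℝ) - β = -((n:ℝ) + β) from by ring, poch_neg]
    have hneg3 : poch (1 - (x:ℝ)) k = (-1:ℝ)^k * poch ((x:ℝ) - k) k := by
      rw [show 1 - (x:ℝ) = -((x:ℝ) - 1) from by ring, poch_neg,
          show (x:ℝ) - 1 - k + 1 = (x:ℝ) - k from by ring]
    have hpa : poch (α+1) k ≠ 0 := (poch_pos (by linarith) k).ne'
    have hmnx : (0:ℝ) < (m:ℝ) - n - x := by
      have h9 : (x:ℤ) + n + 1 ≤ m := by omega
      have h10 : ((x:ℝ) + n + 1) ≤ (m:ℝ) := by exact_mod_cast h9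
      linarith
    have hpm : poch ((m:ℝ)-n-x) k ≠ 0 := (poch_pos hmnx k).ne'
    have hfk : ((Nat.factorial k : ℕ):ℝ) ≠ 0 := by positivity
    have hmx0 : (0:ℝ) < (m:ℝ) - x := by
      have : (0:ℝ) ≤ (n:ℝ) := Nat.cast_nonneg n
      linarith
    have hΓmx : Real.Gamma ((m:ℝ) - x) ≠ 0 := (Real.Gamma_pos_of_pos hmx0).ne'
    simp only [hT]
    rw [hsub, Nat.choose_symm hk', hc1]
    rw [show α + (n:ℝ) - ((n:ℝ)-k) + 1 = α+1+(k:ℝ) from by ring]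
    rw [show (x:ℝ) + ((n:ℝ)-k) - n = (x:ℝ) - k from by ring]
    rw [show β + ((n:ℝ)-k) + 1 = (n:ℝ)+β-(k:ℝ)+1 from by ring]
    rw [show (m:ℝ) - x - ((n:ℝ)-k) = (m:ℝ)-n-x+(k:ℝ) from by ring]
    rw [hadd1, hadd2, hneg1, hneg2, hneg3]
    rcases neg_one_pow_eq_or ℝ k with h | h <;>
      rw [h] <;> rw [mul_div_assoc', div_eq_iff (mul_ne_zero (mul_ne_zero hpa hpm) hfk)] <;> ring
  rw [stepA, stepB, stepC]
  have := Finset.sum_range_reflect T (n+1)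
  simp only [Nat.add_sub_cancel] at this
  exact this.symm
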